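/- arXiv:2503.18005 — 2 statements merged into one kernel-verified Lean document; each statement's English description precedes it below -/
import Mathlib

section
/- With h₂ = 2a^I + βk^I - sqrt(4 a^I β k^I + (βk^I)^2 + 2 k^I φ^I), the constant g₁ = 4k^I/(2a^I - h₂ + 2βk^I + 2κ^α k^I) is well-defined (the denominator is strictly positive) and strictly positive. -/
/-- The constant g₁ is well-defined (its denominator is strictly positive) and
strictly positive. -/
theorem stmt_3 (β kI κα aI φI : ℝ) (hβ : 0 < β) (hk : 0 < kI)
    (hκ : 0 ≤ κα) (ha : 0 ≤ aI) (hφ : 0 ≤ φI) (hpos : 0 < aI * β + φI / 2) :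
    let h₂ := 2 * aI + β * kI -
      Real.sqrt (4 * aI * β * kI + (β * kI) ^ 2 + 2 * kI * φI)
    0 < 2 * aI - h₂ + 2 * β * kI + 2 * κα * kI ∧
      0 < 4 * kI / (2 * aI - h₂ + 2 * β * kI + 2 * κα * kI) := by
  intro h₂
  have hs : 0 ≤ Real.sqrt (4 * aI * β * kI + (β * kI) ^ 2 + 2 * kI * φI) :=
    Real.sqrt_nonneg _
  have hden : 0 < 2 * aI - h₂ + 2 * β * kI + 2 * κα * kI := by
    simp only [h₂]
    nlinarith [mul_pos hβ hk, mul_nonneg hκ hk.le]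
  exact ⟨hden, div_pos (by linarith) hden⟩
end

section
/- For any constants β > 0, κ^α > 0, σ^α ≥ 0, g₁ ∈ ℝ, k^I > 0, the function h₀(α) = f₀ + f₂ α² with f₂ = g₁²/(4k^I(β + 2κ^α)) and f₀ = f₂ (σ^α)²/β satisfies the ODE -β h₀(α) - κ^α α h₀'(α) + (1/2)(σ^α)² h₀''(α) + (g₁ α)²/(4k^I) = 0 for all α ∈ ℝ. -/
/-- The zeroth-order coefficient h₀(α) = f₀ + f₂ α², with
f₂ = g₁² / (4 kI (β + 2 κα)) and f₀ = f₂ (σα)² / β, satisfies the ODE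
coming from the informed trader's HJB equation. -/
theorem stmt_16 (β κα σα g₁ kI : ℝ) (hβ : 0 < β) (hκ : 0 < κα)
    (hσ : 0 ≤ σα) (hk : 0 < kI) :
    let f₂ := g₁ ^ 2 / (4 * kI * (β + 2 * κα))
    let f₀ := f₂ * σα ^ 2 / β
    let h₀ : ℝ → ℝ := fun α => f₀ + f₂ * α ^ 2
    ∀ α : ℝ,
      -β * h₀ α - κα * α * deriv h₀ α + (1 / 2) * σα ^ 2 * deriv (deriv h₀) α +
        (g₁ * α) ^ 2 / (4 * kI) = 0 := by
  intro f₂ f₀ h₀ α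
  have hd : deriv h₀ = fun x => f₂ * 2 * x := by
    funext x
    show deriv (fun x => f₀ + f₂ * x ^ 2) x = _
    rw [deriv_const_add]
    rw [deriv_const_mul _ (differentiable_pow 2).differentiableAt, deriv_pow_field]
    ring
  have hdd : deriv (fun x => f₂ * 2 * x) α = f₂ * 2 := by
    simpa using ((hasDerivAt_id α).const_mul (f₂ * 2)).deriv
  rw [hd, hdd]
  show -β * (f₀ + f₂ * α ^ 2) - κα * α * (f₂ * 2 * α) + 1 / 2 * σα ^ 2 * (f₂ * 2) +
    (g₁ * α) ^ 2 / (4 * kI) = 0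
  have h1 : β + 2 * κα ≠ 0 := by positivity
  have h2 : β ≠ 0 := hβ.ne'
  have h3 : kI ≠ 0 := hk.ne'
  simp only [f₀, f₂]
  field_simp
  ring
end
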